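/- For every regular expression r with tests, the rewriting procedure (replace r'^* by tt?; replace φ;r' and r';φ by ff? and φ+r', r'+φ by r' for propositional φ; merge tests via ψ₀?+ψ₁? ↦ (ψ₀∨ψ₁)? and ψ₀?;ψ₁? ↦ (ψ₀∧ψ₁)?) yields a single test r̂ such that for every ω-word w and every valuation α, R(r, w, α) ∩ {(n,n) | n ∈ ℕ} = R(r̂, w, α). -/

import Mathlib

namespace PLDLPaper

/-- Propositional formulas over atomic propositions `P`. -/
inductive PropF (P : Type) where
  | tru : PropF P
  | fls : PropF P
  | atom : P → PropF P
  | natom : P → PropF P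
  | conj : PropF P → PropF P → PropF P
  | disj : PropF P → PropF P → PropF P

def PropF.eval {P : Type} (A : P → Prop) : PropF P → Prop
  | .tru => True
  | .fls => False
  | .atom p => A p
  | .natom p => ¬ A p
  | .conj φ ψ => φ.eval A ∧ ψ.eval A
  | .disj φ ψ => φ.eval A ∨ ψ.eval A

mutual
/-- PLDL formulas (in negation normal form) over atomic propositions `P`
and variables `V`, extended with the fresh coloring proposition `p`
(`colp`/`colnp`) and the changepoint-bounded operators of LDL_cp. -/
inductive Frm (P V : Type) where
  | pos : P → Frm P V
  | neg : P → Frm P V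
  | colp : Frm P V
  | colnp : Frm P V
  | and : Frm P V → Frm P V → Frm P V
  | or : Frm P V → Frm P V → Frm P V
  | dia : RE P V → Frm P V → Frm P V
  | box : RE P V → Frm P V → Frm P V
  | diaLe : RE P V → V → Frm P V → Frm P V
  | boxLe : RE P V → V → Frm P V → Frm P V
  | diaCp : RE P V → Frm P V → Frm P V
  | boxCp : RE P V → Frm P V → Frm P V
/-- Regular expressions with tests. -/
inductive RE (P V : Type) where
  | prop : PropF P → RE P V
  | test : Frm P V → RE P V
  | plus : RE P V → RE P V → RE P V
  | comp : RE P V → RE P V → RE P V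
  | star : RE P V → RE P V
end

/-- `n` is a changepoint of the color sequence `c`. -/
def Changepoint (c : ℕ → Prop) (n : ℕ) : Prop :=
  n = 0 ∨ ¬ (c (n - 1) ↔ c n)

/-- The infix at positions `n, …, n + j - 1` contains at most one changepoint. -/
def AtMostOneCP (c : ℕ → Prop) (n j : ℕ) : Prop :=
  ∀ m₁ m₂, n ≤ m₁ → m₁ < n + j → n ≤ m₂ → m₂ < n + j →
    Changepoint c m₁ → Changepoint c m₂ → m₁ = m₂

mutual
/-- Satisfaction `(w, n, α) ⊨ φ`; the color of position `n` (truth value of the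
fresh proposition `p`) is `c n`. -/
def Sat {P V : Type} (w : ℕ → P → Prop) (c : ℕ → Prop) (α : V → ℕ) :
    Frm P V → ℕ → Prop
  | .pos p, n => w n p
  | .neg p, n => ¬ w n p
  | .colp, n => c n
  | .colnp, n => ¬ c n
  | .and φ ψ, n => Sat w c α φ n ∧ Sat w c α ψ n
  | .or φ ψ, n => Sat w c α φ n ∨ Sat w c α ψ n
  | .dia r ψ, n => ∃ j, Match w c α r n (n + j) ∧ Sat w c α ψ (n + j)
  | .box r ψ, n => ∀ j, Match w c α r n (n + j) → Sat w c α ψ (n + j)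
  | .diaLe r z ψ, n => ∃ j, j ≤ α z ∧ Match w c α r n (n + j) ∧ Sat w c α ψ (n + j)
  | .boxLe r z ψ, n => ∀ j, j ≤ α z → Match w c α r n (n + j) → Sat w c α ψ (n + j)
  | .diaCp r ψ, n => ∃ j, Match w c α r n (n + j) ∧ AtMostOneCP c n j ∧ Sat w c α ψ (n + j)
  | .boxCp r ψ, n => ∀ j, Match w c α r n (n + j) → AtMostOneCP c n j → Sat w c α ψ (n + j)
/-- The match relation `R(r, w, α)`. -/
def Match {P V : Type} (w : ℕ → P → Prop) (c : ℕ → Prop) (α : V → ℕ) :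
    RE P V → ℕ → ℕ → Prop
  | .prop φ, m, n => n = m + 1 ∧ φ.eval (w m)
  | .test ψ, m, n => n = m ∧ Sat w c α ψ m
  | .plus r₀ r₁, m, n => Match w c α r₀ m n ∨ Match w c α r₁ m n
  | .comp r₀ r₁, m, n => ∃ k, Match w c α r₀ m k ∧ Match w c α r₁ k n
  | .star r, m, n => ∃ (k : ℕ) (f : ℕ → ℕ), f 0 = m ∧ f k = n ∧
      ∀ i, i < k → Match w c α r (f i) (f (i + 1))
end

variable {P V : Type}

mutual
/-- Size of a formula. -/
def Frm.size : Frm P V → ℕ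
  | .pos _ => 1
  | .neg _ => 1
  | .colp => 1
  | .colnp => 1
  | .and φ ψ => 1 + φ.size + ψ.size
  | .or φ ψ => 1 + φ.size + ψ.size
  | .dia r ψ => 1 + r.size + ψ.size
  | .box r ψ => 1 + r.size + ψ.size
  | .diaLe r _ ψ => 1 + r.size + ψ.size
  | .boxLe r _ ψ => 1 + r.size + ψ.size
  | .diaCp r ψ => 1 + r.size + ψ.size
  | .boxCp r ψ => 1 + r.size + ψ.size
/-- Size (length) of a regular expression. -/
def RE.size : RE P V → ℕ
  | .prop _ => 1
  | .test ψ => 1 + ψ.size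
  | .plus r₀ r₁ => 1 + r₀.size + r₁.size
  | .comp r₀ r₁ => 1 + r₀.size + r₁.size
  | .star r => 1 + r.size
end

mutual
/-- Variables parameterizing diamond operators. -/
def Frm.dvars [DecidableEq V] : Frm P V → Finset V
  | .pos _ => ∅
  | .neg _ => ∅
  | .colp => ∅
  | .colnp => ∅
  | .and φ ψ => φ.dvars ∪ ψ.dvars
  | .or φ ψ => φ.dvars ∪ ψ.dvars
  | .dia r ψ => r.dvars ∪ ψ.dvars
  | .box r ψ => r.dvars ∪ ψ.dvars
  | .diaLe r z ψ => insert z (r.dvars ∪ ψ.dvars)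
  | .boxLe r _ ψ => r.dvars ∪ ψ.dvars
  | .diaCp r ψ => r.dvars ∪ ψ.dvars
  | .boxCp r ψ => r.dvars ∪ ψ.dvars
def RE.dvars [DecidableEq V] : RE P V → Finset V
  | .prop _ => ∅
  | .test ψ => ψ.dvars
  | .plus r₀ r₁ => r₀.dvars ∪ r₁.dvars
  | .comp r₀ r₁ => r₀.dvars ∪ r₁.dvars
  | .star r => r.dvars
end

mutual
/-- Variables parameterizing box operators. -/
def Frm.bvars [DecidableEq V] : Frm P V → Finset V
  | .pos _ => ∅
  | .neg _ => ∅
  | .colp => ∅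
  | .colnp => ∅
  | .and φ ψ => φ.bvars ∪ ψ.bvars
  | .or φ ψ => φ.bvars ∪ ψ.bvars
  | .dia r ψ => r.bvars ∪ ψ.bvars
  | .box r ψ => r.bvars ∪ ψ.bvars
  | .diaLe r _ ψ => r.bvars ∪ ψ.bvars
  | .boxLe r z ψ => insert z (r.bvars ∪ ψ.bvars)
  | .diaCp r ψ => r.bvars ∪ ψ.bvars
  | .boxCp r ψ => r.bvars ∪ ψ.bvars
def RE.bvars [DecidableEq V] : RE P V → Finset V
  | .prop _ => ∅
  | .test ψ => ψ.bvars
  | .plus r₀ r₁ => r₀.bvars ∪ r₁.bvars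
  | .comp r₀ r₁ => r₀.bvars ∪ r₁.bvars
  | .star r => r.bvars
end

mutual
/-- The formula contains no changepoint-bounded operators. -/
def Frm.noCp : Frm P V → Prop
  | .pos _ => True
  | .neg _ => True
  | .colp => True
  | .colnp => True
  | .and φ ψ => φ.noCp ∧ ψ.noCp
  | .or φ ψ => φ.noCp ∧ ψ.noCp
  | .dia r ψ => r.noCp ∧ ψ.noCp
  | .box r ψ => r.noCp ∧ ψ.noCp
  | .diaLe r _ ψ => r.noCp ∧ ψ.noCp
  | .boxLe r _ ψ => r.noCp ∧ ψ.noCp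
  | .diaCp _ _ => False
  | .boxCp _ _ => False
def RE.noCp : RE P V → Prop
  | .prop _ => True
  | .test ψ => ψ.noCp
  | .plus r₀ r₁ => r₀.noCp ∧ r₁.noCp
  | .comp r₀ r₁ => r₀.noCp ∧ r₁.noCp
  | .star r => r.noCp
end

mutual
/-- The formula does not mention the fresh coloring proposition `p`. -/
def Frm.noCol : Frm P V → Prop
  | .pos _ => True
  | .neg _ => True
  | .colp => False
  | .colnp => False
  | .and φ ψ => φ.noCol ∧ ψ.noCol
  | .or φ ψ => φ.noCol ∧ ψ.noCol
  | .dia r ψ => r.noCol ∧ ψ.noCol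
  | .box r ψ => r.noCol ∧ ψ.noCol
  | .diaLe r _ ψ => r.noCol ∧ ψ.noCol
  | .boxLe r _ ψ => r.noCol ∧ ψ.noCol
  | .diaCp r ψ => r.noCol ∧ ψ.noCol
  | .boxCp r ψ => r.noCol ∧ ψ.noCol
def RE.noCol : RE P V → Prop
  | .prop _ => True
  | .test ψ => ψ.noCol
  | .plus r₀ r₁ => r₀.noCol ∧ r₁.noCol
  | .comp r₀ r₁ => r₀.noCol ∧ r₁.noCol
  | .star r => r.noCol
end

/-- A genuine PLDL formula: no changepoint-bounded operators and no
occurrence of the fresh proposition `p`. -/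
def IsPLDL (φ : Frm P V) : Prop := φ.noCp ∧ φ.noCol

/-- Well-formedness: no variable parameterizes both a diamond and a box. -/
def WellFormed [DecidableEq V] (φ : Frm P V) : Prop :=
  ∀ z, z ∈ φ.dvars → z ∉ φ.bvars

/-- Dualization: the negation of a formula, pushing negations to atoms. -/
def Frm.not : Frm P V → Frm P V
  | .pos p => .neg p
  | .neg p => .pos p
  | .colp => .colnp
  | .colnp => .colp
  | .and φ ψ => .or φ.not ψ.not
  | .or φ ψ => .and φ.not ψ.not
  | .dia r ψ => .box r ψ.not
  | .box r ψ => .dia r ψ.not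
  | .diaLe r z ψ => .boxLe r z ψ.not
  | .boxLe r z ψ => .diaLe r z ψ.not
  | .diaCp r ψ => .boxCp r ψ.not
  | .boxCp r ψ => .diaCp r ψ.not

mutual
/-- `rel φ`: replace every parameterized operator by the corresponding
changepoint-bounded operator. -/
def Frm.rel : Frm P V → Frm P V
  | .pos p => .pos p
  | .neg p => .neg p
  | .colp => .colp
  | .colnp => .colnp
  | .and φ ψ => .and φ.rel ψ.rel
  | .or φ ψ => .or φ.rel ψ.rel
  | .dia r ψ => .dia r.rel ψ.rel
  | .box r ψ => .box r.rel ψ.rel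
  | .diaLe r _ ψ => .diaCp r.rel ψ.rel
  | .boxLe r _ ψ => .boxCp r.rel ψ.rel
  | .diaCp r ψ => .diaCp r.rel ψ.rel
  | .boxCp r ψ => .boxCp r.rel ψ.rel
def RE.rel : RE P V → RE P V
  | .prop φ => .prop φ
  | .test ψ => .test ψ.rel
  | .plus r₀ r₁ => .plus r₀.rel r₁.rel
  | .comp r₀ r₁ => .comp r₀.rel r₁.rel
  | .star r => .star r.rel
end

/-- `θ_∞p = [tt*]⟨tt*⟩p`: the fresh proposition `p` holds infinitely often. -/
def thetaInfP : Frm P V := .box (.star (.prop .tru)) (.dia (.star (.prop .tru)) .colp)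

/-- `θ_∞¬p`. -/
def thetaInfNP : Frm P V := .box (.star (.prop .tru)) (.dia (.star (.prop .tru)) .colnp)

/-- `c(φ) = rel(φ) ∧ θ_∞p ∧ θ_∞¬p`. -/
def cFrm (φ : Frm P V) : Frm P V := .and φ.rel (.and thetaInfP thetaInfNP)

/-- `[i, j)` is a block of the coloring `c`: `i` and `j` are consecutive
changepoints. -/
def IsBlock (c : ℕ → Prop) (i j : ℕ) : Prop :=
  i < j ∧ Changepoint c i ∧ Changepoint c j ∧
    ∀ m, i < m → m < j → ¬ Changepoint c m

/-- Infinitely many changepoints. -/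
def InfCP (c : ℕ → Prop) : Prop := ∀ N, ∃ n, N < n ∧ Changepoint c n

/-- Every block has length at most `k` (and there are infinitely many
changepoints). -/
def kBounded (c : ℕ → Prop) (k : ℕ) : Prop :=
  InfCP c ∧ ∀ i j, IsBlock c i j → j - i ≤ k

/-- Infinitely many changepoints and every block has length at least `k`. -/
def kSpaced (c : ℕ → Prop) (k : ℕ) : Prop :=
  InfCP c ∧ ∀ i j, IsBlock c i j → k ≤ j - i

-- `Frm` has no constants, so truth and falsity are built from the coloring proposition `p`.
def Frm.ff : Frm P V := .and .colp .colnp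

def Frm.tt : Frm P V := .or .colp .colnp

/-- The test `r̂` produced by the rewriting procedure: `φ ↦ ff?`, `r* ↦ tt?`, and tests merged
along `+` and `;`. -/
def RE.toTest : RE P V → Frm P V
  | .prop _ => .ff
  | .test ψ => ψ
  | .plus r₀ r₁ => .or r₀.toTest r₁.toTest
  | .comp r₀ r₁ => .and r₀.toTest r₁.toTest
  | .star _ => .tt

section Match

variable {w : ℕ → P → Prop} {c : ℕ → Prop} {α : V → ℕ}

theorem not_sat_ff (n : ℕ) : ¬ Sat w c α Frm.ff n := fun h => h.2 h.1

theorem sat_tt (n : ℕ) : Sat w c α Frm.tt n := em (c n)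

theorem Match.le : ∀ {r : RE P V} {m n : ℕ}, Match w c α r m n → m ≤ n
  | .prop _, _, _, ⟨rfl, _⟩ => Nat.le_succ _
  | .test _, _, _, ⟨rfl, _⟩ => le_rfl
  | .plus _ _, _, _, .inl h => h.le
  | .plus _ _, _, _, .inr h => h.le
  | .comp _ _, _, _, ⟨_, h₀, h₁⟩ => h₀.le.trans h₁.le
  | .star _, _, _, ⟨k, f, rfl, rfl, hstep⟩ => by
      have chain : ∀ j ≤ k, f 0 ≤ f j := by
        intro j
        induction j with
        | zero => exact fun _ => le_rfl
        | succ j ih => exact fun hj => (ih (by omega)).trans (hstep j (by omega)).le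
      exact chain k le_rfl

theorem match_star_self (r : RE P V) (m : ℕ) : Match w c α (.star r) m m :=
  ⟨0, fun _ => m, rfl, rfl, fun _ h => absurd h (Nat.not_lt_zero _)⟩

theorem sat_toTest_iff : ∀ (r : RE P V) (m : ℕ), Sat w c α r.toTest m ↔ Match w c α r m m
  | .prop _, m => iff_of_false (not_sat_ff m) fun h => Nat.succ_ne_self m h.1.symm
  | .test _, _ => (and_iff_right rfl).symm
  | .plus r₀ r₁, m => or_congr (sat_toTest_iff r₀ m) (sat_toTest_iff r₁ m)
  | .comp r₀ r₁, m => by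
      rw [RE.toTest, Sat, sat_toTest_iff r₀, sat_toTest_iff r₁]
      constructor
      · rintro ⟨h₀, h₁⟩
        exact ⟨m, h₀, h₁⟩
      · rintro ⟨k, h₀, h₁⟩
        -- both factors of a zero-length match have zero length
        obtain rfl : k = m := le_antisymm h₁.le h₀.le
        exact ⟨h₀, h₁⟩
  | .star r, m => iff_of_true (sat_tt m) (match_star_self r m)

end Match

/-- the rewriting procedure yields a single test `r̂` whose
match relation is exactly the zero-length part of the match relation of `r`. -/
theorem rewrite_to_single_test {P V : Type} (r : RE P V)
    (hr : r.noCp ∧ r.noCol) :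
    ∃ ψ : Frm P V, ∀ (w : ℕ → P → Prop) (c : ℕ → Prop) (α : V → ℕ) (m n : ℕ),
      Match w c α (RE.test ψ) m n ↔ (Match w c α r m n ∧ m = n) := by
  refine ⟨r.toTest, fun w c α m n => ?_⟩
  rw [Match]
  constructor
  · rintro ⟨rfl, h⟩
    exact ⟨(sat_toTest_iff r n).mp h, rfl⟩
  · rintro ⟨h, rfl⟩
    exact ⟨rfl, (sat_toTest_iff r m).mpr h⟩

end PLDLPaper
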